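/- Let (A, A', ρ, μ, η, ξ) be a matched pair of associative K-algebras. Then the bilinear multiplication on A ⊕ A' defined by (x,u)·_⋈(y,v) = (x·y + ξ(v)x + η(u)y, u·v + ρ(x)v + μ(y)u) is associative; moreover, the subspace 0 ⊕ A' is closed under this multiplication (so (A ⋈ A', A, A') is a quasi-twilled associative algebra). -/
import Mathlib


/-- The multiplication `(x,u)·_⋈(y,v) = (x·y + ξ(v)x + η(u)y, u·v + ρ(x)v + μ(y)u)`
on `A ⊕ A'`. -/
def mulBowtie {K : Type*} [Field K] {A A' : Type*}
    [AddCommGroup A] [Module K A] [AddCommGroup A'] [Module K A']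
    (m : A →ₗ[K] A →ₗ[K] A) (m' : A' →ₗ[K] A' →ₗ[K] A')
    (ρ μ : A →ₗ[K] A' →ₗ[K] A') (η ξ : A' →ₗ[K] A →ₗ[K] A)
    (p q : A × A') : A × A' :=
  (m p.1 q.1 + ξ q.2 p.1 + η p.2 q.1, m' p.2 q.2 + ρ p.1 q.2 + μ q.1 p.2)

/-- for a matched pair `(A, A', ρ, μ, η, ξ)` of associative algebras,
`·_⋈` is associative on `A ⊕ A'` and `0 ⊕ A'` is closed under it. -/
theorem stmt8 {K : Type*} [Field K] {A A' : Type*}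
    [AddCommGroup A] [Module K A] [AddCommGroup A'] [Module K A']
    (m : A →ₗ[K] A →ₗ[K] A) (m' : A' →ₗ[K] A' →ₗ[K] A')
    (assocA : ∀ x y z : A, m (m x y) z = m x (m y z))
    (assocA' : ∀ u v w : A', m' (m' u v) w = m' u (m' v w))
    (ρ μ : A →ₗ[K] A' →ₗ[K] A') (η ξ : A' →ₗ[K] A →ₗ[K] A)
    (hρ : ∀ (x y : A) (u : A'), ρ (m x y) u = ρ x (ρ y u))
    (hμ : ∀ (x y : A) (u : A'), μ (m x y) u = μ y (μ x u))
    (hρμ : ∀ (x y : A) (u : A'), ρ x (μ y u) = μ y (ρ x u))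
    (hη : ∀ (u v : A') (x : A), η (m' u v) x = η u (η v x))
    (hξ : ∀ (u v : A') (x : A), ξ (m' u v) x = ξ v (ξ u x))
    (hηξ : ∀ (u v : A') (x : A), η u (ξ v x) = ξ v (η u x))
    (mp1 : ∀ (x : A) (u v : A'), ρ x (m' u v) = ρ (ξ u x) v + m' (ρ x u) v)
    (mp2 : ∀ (x : A) (u v : A'), μ x (m' u v) = μ (η v x) u + m' u (μ x v))
    (mp3 : ∀ (u : A') (x y : A), η u (m x y) = η (μ x u) y + m (η u x) y)
    (mp4 : ∀ (u : A') (x y : A), ξ u (m x y) = ξ (ρ y u) x + m x (ξ u y))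
    (mp5 : ∀ (x : A) (u v : A'),
      ρ (η u x) v + m' (μ x u) v = μ (ξ v x) u + m' u (ρ x v))
    (mp6 : ∀ (u : A') (x y : A),
      η (ρ x u) y + m (ξ u x) y = ξ (μ y u) x + m x (η u y)) :
    (∀ p q r : A × A',
        mulBowtie m m' ρ μ η ξ (mulBowtie m m' ρ μ η ξ p q) r
          = mulBowtie m m' ρ μ η ξ p (mulBowtie m m' ρ μ η ξ q r)) ∧
    (∀ u v : A', (mulBowtie m m' ρ μ η ξ ((0 : A), u) ((0 : A), v)).1 = 0) := by
  constructor
  · rintro ⟨x, u⟩ ⟨y, v⟩ ⟨z, w⟩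
    simp only [mulBowtie, Prod.mk.injEq, map_add, LinearMap.add_apply]
    simp only [assocA, assocA', hρ, hμ, hρμ, hη, hξ, hηξ, mp1, mp2, mp3, mp4, map_add,
      LinearMap.add_apply]
    constructor
    · linear_combination (norm := abel) mp6 v x z
    · linear_combination (norm := abel) mp5 y u w
  · intro u v
    simp [mulBowtie]
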